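/- arXiv:2205.06185 — 3 statements merged into one kernel-verified Lean document; each statement's English description precedes it below -/
import Mathlib

section
/- Let R be a simple unital ring, let X be a finite nonempty set, and let G be a finite group acting on R by ring automorphisms in such a way that every non-identity element of G acts by an outer automorphism of R, and acting transitively on X. Then the crossed product ring (∏_{x∈X} R) ⋊ G is a simple ring. -/
set_option linter.unusedSectionVars false

open Finset

/-- The crossed product `(∏_{x ∈ X} R) ⋊ G` : its underlying type is that of functions
`G → (∏_{x ∈ X} R)`, thought of as formal sums `∑_g a_g · g` with `a_g ∈ ∏_{x ∈ X} R`. -/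
def CrossedProduct (R X G : Type) := G → X → R

namespace CrossedProduct

variable {R X G : Type} [Ring R] [Group G] [Fintype G] [DecidableEq G]
  [MulSemiringAction G R] [MulAction G X]

/-- The action of `G` on `∏_{x ∈ X} R` combining the action on `R` with the
permutation action on the coordinates: `(g · a)(x) = g · (a (g⁻¹ · x))`. -/
def act (g : G) (a : X → R) : X → R := fun x => g • a (g⁻¹ • x)

lemma act_mul (g : G) (a b : X → R) : act g (a * b) = act g a * act g b := by
  funext x; simp [act, smul_mul']

lemma act_act (g h : G) (a : X → R) : act g (act h a) = act (g * h) a := by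
  funext x; simp [act, mul_smul, mul_inv_rev]

lemma act_one (g : G) : act g (1 : X → R) = 1 := by
  funext x; simp [act]

lemma one_act (a : X → R) : act (1 : G) a = a := by
  funext x; simp [act]

lemma act_zero (g : G) : act g (0 : X → R) = 0 := by
  funext x; simp [act]

lemma act_add (g : G) (a b : X → R) : act g (a + b) = act g a + act g b := by
  funext x; simp [act]

lemma act_sum {ι : Type*} (g : G) (s : Finset ι) (f : ι → X → R) :
    act g (∑ i ∈ s, f i) = ∑ i ∈ s, act g (f i) := by
  funext x; simp [act, Finset.sum_apply, Finset.smul_sum]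

instance : AddCommGroup (CrossedProduct R X G) :=
  inferInstanceAs (AddCommGroup (G → X → R))

/-- Multiplication on the crossed product, determined by
`(a·g) * (b·h) = (a * (g·b)) · (g*h)`. -/
instance : Mul (CrossedProduct R X G) :=
  ⟨fun f h k => ∑ g : G, f g * act g (h (g⁻¹ * k))⟩

lemma mul_def (f h : CrossedProduct R X G) (k : G) :
    (f * h) k = ∑ g : G, f g * act g (h (g⁻¹ * k)) := rfl

instance : One (CrossedProduct R X G) :=
  ⟨fun k => if k = 1 then 1 else 0⟩

lemma one_def (k : G) :
    (1 : CrossedProduct R X G) k = if k = 1 then 1 else 0 := rfl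

instance instRing : Ring (CrossedProduct R X G) :=
  { (inferInstance : AddCommGroup (CrossedProduct R X G)),
    (inferInstance : Mul (CrossedProduct R X G)),
    (inferInstance : One (CrossedProduct R X G)) with
    left_distrib := by
      intro f h l
      funext k
      show (f * (h + l)) k = (f * h) k + (f * l) k
      simp only [mul_def]
      rw [← Finset.sum_add_distrib]
      refine Finset.sum_congr rfl fun g _ => ?_
      have : (h + l) (g⁻¹ * k) = h (g⁻¹ * k) + l (g⁻¹ * k) := rfl
      rw [this, act_add, mul_add]
    right_distrib := by
      intro f h l
      funext k
      show ((f + h) * l) k = (f * l) k + (h * l) k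
      simp only [mul_def]
      rw [← Finset.sum_add_distrib]
      refine Finset.sum_congr rfl fun g _ => ?_
      have : (f + h) g = f g + h g := rfl
      rw [this, add_mul]
    zero_mul := by
      intro f
      funext k
      show (0 * f) k = 0
      simp only [mul_def]
      refine Finset.sum_eq_zero fun g _ => ?_
      have : (0 : CrossedProduct R X G) g = 0 := rfl
      rw [this, zero_mul]
    mul_zero := by
      intro f
      funext k
      show (f * 0) k = 0
      simp only [mul_def]
      refine Finset.sum_eq_zero fun g _ => ?_
      have : (0 : CrossedProduct R X G) (g⁻¹ * k) = 0 := rfl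
      rw [this, act_zero, mul_zero]
    one_mul := by
      intro f
      funext k
      show (1 * f) k = f k
      simp only [mul_def, one_def]
      rw [Finset.sum_eq_single 1]
      · simp [one_act]
      · intro g _ hg
        simp [hg]
      · simp
    mul_one := by
      intro f
      funext k
      show (f * 1) k = f k
      simp only [mul_def, one_def]
      rw [Finset.sum_eq_single k]
      · simp [act_one]
      · intro g _ hg
        have : ¬(g⁻¹ * k = 1) := by
          simpa [inv_mul_eq_one] using hg
        simp only [this, if_false]
        rw [act_zero, mul_zero]
      · simp
    mul_assoc := by
      intro f h l
      funext k
      show (f * h * l) k = (f * (h * l)) k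
      simp only [mul_def]
      calc
        ∑ g' : G, (∑ g : G, f g * act g (h (g⁻¹ * g'))) * act g' (l (g'⁻¹ * k))
            = ∑ g' : G, ∑ g : G,
                f g * act g (h (g⁻¹ * g')) * act g' (l (g'⁻¹ * k)) := by
              simp [Finset.sum_mul]
        _ = ∑ g : G, ∑ g' : G,
                f g * act g (h (g⁻¹ * g')) * act g' (l (g'⁻¹ * k)) :=
              Finset.sum_comm
        _ = ∑ g : G, ∑ u : G,
                f g * act g (h (g⁻¹ * (g * u))) * act (g * u) (l ((g * u)⁻¹ * k)) :=
              Finset.sum_congr rfl fun g _ => (Equiv.sum_comp (Equiv.mulLeft g) _).symm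
        _ = ∑ g : G, ∑ u : G,
                f g * act g (h u) * act (g * u) (l (u⁻¹ * (g⁻¹ * k))) := by
              refine Finset.sum_congr rfl fun g _ => Finset.sum_congr rfl fun u _ => ?_
              rw [inv_mul_cancel_left, mul_inv_rev]
              simp [mul_assoc]
        _ = ∑ g : G, f g * act g ((h * l) (g⁻¹ * k)) := by
              refine Finset.sum_congr rfl fun g _ => ?_
              rw [mul_def, act_sum, Finset.mul_sum]
              refine Finset.sum_congr rfl fun u _ => ?_
              rw [act_mul, act_act, mul_assoc] }

end CrossedProduct

/-!
Let `I` be a nonzero ideal and `f ∈ I` a nonzero element whose support in `G` has minimal size,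
translated so that `1` lies in it. For `x` with `f 1 x ≠ 0`, the `x`-coordinates of the
coefficients at `1` of the elements of `I` supported in `support f` form a nonzero ideal of `R`,
so they contain `1`; cutting down by the idempotent `eₓ = Pi.single x 1` gives `h ∈ I` with
`h 1 = eₓ`. By minimality `h` commutes with `∏_{x ∈ X} R`, and as the action of `G` is outer,
such an element lives in degree `1`; hence `eₓ ∈ I`. Conjugating by `G`, transitivity puts every
`e_y` in `I`, and these sum to `1`.
-/

namespace IsSimpleRing

variable {R : Type*} [Ring R] [IsSimpleRing R]

lemma exists_mul_eq_one_of_forall_exists_mul_eq {c : R} (hc : c ≠ 0)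
    (h : ∀ r, ∃ t, c * r = t * c) : ∃ t, t * c = 1 := by
  let J : TwoSidedIdeal R := .mk' {x | ∃ t, t * c = x}
    ⟨0, zero_mul c⟩
    (by rintro _ _ ⟨t, rfl⟩ ⟨s, rfl⟩; exact ⟨t + s, add_mul t s c⟩)
    (by rintro _ ⟨t, rfl⟩; exact ⟨-t, neg_mul t c⟩)
    (by rintro x _ ⟨t, rfl⟩; exact ⟨x * t, mul_assoc x t c⟩)
    (by
      rintro _ y ⟨t, rfl⟩
      obtain ⟨s, hs⟩ := h y
      exact ⟨t * s, by rw [mul_assoc, mul_assoc, hs]⟩)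
  have hcJ : c ∈ J := (TwoSidedIdeal.mem_mk' _ _ _ _ _ _ _).2 ⟨1, one_mul c⟩
  obtain ⟨t, ht⟩ : (1 : R) ∈ {x | ∃ t, t * c = x} :=
    (TwoSidedIdeal.mem_mk' _ _ _ _ _ _ _).1 (one_mem_of_ne_zero_mem J hc hcJ)
  exact ⟨t, ht⟩

lemma exists_mul_eq_one_of_forall_exists_eq_mul {c : R} (hc : c ≠ 0)
    (h : ∀ r, ∃ s, r * c = c * s) : ∃ s, c * s = 1 := by
  obtain ⟨s, hs⟩ := exists_mul_eq_one_of_forall_exists_mul_eq (R := Rᵐᵒᵖ)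
    (c := MulOpposite.op c) (by simpa using hc) fun r => by
      obtain ⟨s, hs⟩ := h r.unop
      exact ⟨MulOpposite.op s, MulOpposite.unop_injective <| by
        simp only [MulOpposite.unop_mul, MulOpposite.unop_op]; exact hs⟩
  exact ⟨s.unop, congrArg MulOpposite.unop hs⟩

/-- A nonzero such `c` would be a unit, as `R * c = c * R` is then all of `R`, making `σ`
conjugation by `c⁻¹`. -/
lemma eq_zero_of_forall_mul_eq_mul_apply {σ : R ≃+* R}
    (hσ : ¬ ∃ u : Rˣ, ∀ r : R, σ r = (u : R) * r * (↑u⁻¹ : R))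
    {c : R} (hc : ∀ r, r * c = c * σ r) : c = 0 := by
  by_contra hc0
  obtain ⟨t, ht⟩ := exists_mul_eq_one_of_forall_exists_mul_eq hc0 fun r =>
    ⟨σ.symm r, by rw [hc, σ.apply_symm_apply]⟩
  obtain ⟨s, hs⟩ := exists_mul_eq_one_of_forall_exists_eq_mul hc0 fun r => ⟨σ r, hc r⟩
  have hts : t = s := by rw [← mul_one t, ← hs, ← mul_assoc, ht, one_mul]
  refine hσ ⟨⟨t, c, ht, hts ▸ hs⟩, fun r => ?_⟩
  show σ r = t * r * c
  rw [mul_assoc, hc, ← mul_assoc, ht, one_mul]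

end IsSimpleRing

namespace CrossedProduct

variable {R X G : Type} [Ring R] [Group G] [Fintype G] [DecidableEq G]
  [MulSemiringAction G R] [MulAction G X]

lemma act_piSingle [DecidableEq X] (g : G) (x : X) (r : R) :
    act g (Pi.single x r) = Pi.single (g • x) (g • r) := by
  funext y
  by_cases hy : y = g • x
  · subst hy; simp [act]
  · simp [act, hy, eq_inv_smul_iff, eq_comm]

def single (g : G) : (X → R) →+ CrossedProduct R X G := AddMonoidHom.single (fun _ : G => X → R) g

lemma single_apply (g : G) (a : X → R) (k : G) :
    single g a k = if k = g then a else 0 :=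
  Pi.single_apply (M := X → R) g a k

def support (f : CrossedProduct R X G) : Set G := {k | f k ≠ 0}

lemma support_add_subset (f h : CrossedProduct R X G) :
    support (f + h) ⊆ support f ∪ support h :=
  Function.support_add (f : G → X → R) h

lemma support_subset_of_apply_eq_zero {f h : CrossedProduct R X G}
    (hfh : ∀ k, h k = 0 → f k = 0) : support f ⊆ support h :=
  fun k hf hh => hf (hfh k hh)

lemma single_one_mul_apply (b : X → R) (f : CrossedProduct R X G) (k : G) :
    (single 1 b * f : CrossedProduct R X G) k = b * f k := by
  rw [mul_def, Finset.sum_eq_single 1 (fun g _ hg => by simp [single_apply, hg]) (by simp)]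
  simp [single_apply, one_act]

lemma mul_single_one_apply (f : CrossedProduct R X G) (b : X → R) (k : G) :
    (f * single 1 b : CrossedProduct R X G) k = f k * act k b := by
  rw [mul_def, Finset.sum_eq_single k (fun g _ hg => by
    simp [single_apply, inv_mul_eq_one, hg, act_zero]) (by simp)]
  simp [single_apply]

lemma mul_single_apply (f : CrossedProduct R X G) (g k : G) :
    (f * single g 1 : CrossedProduct R X G) k = f (k * g⁻¹) := by
  rw [mul_def, Finset.sum_eq_single (k * g⁻¹) (fun l _ hl => by
    rw [single_apply, if_neg (by rintro rfl; simp at hl), act_zero, mul_zero]) (by simp)]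
  simp [single_apply, act_one]

lemma single_mul_apply (g : G) (f : CrossedProduct R X G) (k : G) :
    (single g 1 * f : CrossedProduct R X G) k = act g (f (g⁻¹ * k)) := by
  rw [mul_def, Finset.sum_eq_single g (fun l _ hl => by simp [single_apply, hl]) (by simp)]
  simp [single_apply]

lemma single_mul_single_one_mul_single (g : G) (a : X → R) :
    single g 1 * single 1 a * single g⁻¹ 1 = (single 1 (act g a) : CrossedProduct R X G) := by
  funext k
  rw [mul_single_apply, single_mul_apply, single_apply, single_apply]
  by_cases hk : k = 1
  · simp [hk]
  · simp [hk, inv_mul_eq_one, act_zero]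

lemma single_one_one : single 1 1 = (1 : CrossedProduct R X G) := by
  funext k
  rw [single_apply, one_def]

lemma sum_single_one_piSingle [Fintype X] [DecidableEq X] :
    ∑ x : X, single 1 (Pi.single x (1 : R)) = (1 : CrossedProduct R X G) := by
  rw [← map_sum, Finset.univ_sum_single]
  exact single_one_one

instance [Nontrivial R] [Nonempty X] : Nontrivial (CrossedProduct R X G) := by
  refine ⟨0, 1, fun h => zero_ne_one (α := X → R) ?_⟩
  have := congrArg (fun f : CrossedProduct R X G => f 1) h
  rwa [one_def, if_pos rfl] at this

lemma ncard_support_mul_single (f : CrossedProduct R X G) (g : G) :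
    (support (f * single g 1)).ncard = (support f).ncard := by
  have : support (f * single g 1) = (· * g⁻¹) ⁻¹' support f := by
    ext k
    show (f * single g 1 : CrossedProduct R X G) k ≠ 0 ↔ f (k * g⁻¹) ≠ 0
    rw [mul_single_apply]
  rw [this, Set.ncard_preimage_of_injective_subset_range (mul_left_injective g⁻¹)
    fun k _ => mul_right_surjective g⁻¹ k]

lemma eq_single_one_of_forall_commute [IsSimpleRing R]
    (houter : ∀ g : G, g ≠ 1 → ¬ ∃ u : Rˣ, ∀ r : R, g • r = (u : R) * r * (↑u⁻¹ : R))
    {c : CrossedProduct R X G} (hc : ∀ b, single 1 b * c = c * single 1 b) :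
    c = single 1 (c 1) := by
  classical
  funext k x
  rw [single_apply]
  split_ifs with hk
  · rw [hk]
  have key : ∀ r : R, r * c k x = c k x * if k • x = x then k • r else 0 := fun r => by
    have := congrArg (fun f : CrossedProduct R X G => f k x) (hc (Pi.single x r))
    simp only [single_one_mul_apply, mul_single_one_apply, act_piSingle] at this
    simpa [Pi.single_apply, eq_comm] using this
  by_cases hx : k • x = x
  · exact IsSimpleRing.eq_zero_of_forall_mul_eq_mul_apply
      (σ := MulSemiringAction.toRingEquiv G R k) (houter k hk) fun r => by simpa [hx] using key r
  · simpa [hx] using key 1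

section Ideal

def coeffIdeal (I : TwoSidedIdeal (CrossedProduct R X G)) (S : Set G) (x : X) : TwoSidedIdeal R :=
  .mk' {r | ∃ h ∈ I, support h ⊆ S ∧ h 1 x = r}
    ⟨0, I.zero_mem, fun _ hk => (hk rfl).elim, rfl⟩
    (by
      rintro _ _ ⟨h, hI, hS, rfl⟩ ⟨h', hI', hS', rfl⟩
      exact ⟨h + h', I.add_mem hI hI', (support_add_subset h h').trans (Set.union_subset hS hS'),
        rfl⟩)
    (by
      rintro _ ⟨h, hI, hS, rfl⟩
      refine ⟨-h, I.neg_mem hI, (support_subset_of_apply_eq_zero fun k hk => ?_).trans hS, rfl⟩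
      exact show -h k = 0 by rw [hk, neg_zero])
    (by
      rintro r _ ⟨h, hI, hS, rfl⟩
      refine ⟨single 1 (fun _ => r) * h, I.mul_mem_left _ _ hI,
        (support_subset_of_apply_eq_zero fun k hk => ?_).trans hS, ?_⟩
      · rw [single_one_mul_apply, hk, mul_zero]
      · rw [single_one_mul_apply]; rfl)
    (by
      rintro _ r ⟨h, hI, hS, rfl⟩
      refine ⟨h * single 1 (fun _ => r), I.mul_mem_right _ _ hI,
        (support_subset_of_apply_eq_zero fun k hk => ?_).trans hS, ?_⟩
      · rw [mul_single_one_apply, hk, zero_mul]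
      · rw [mul_single_one_apply, one_act]; rfl)

variable {I : TwoSidedIdeal (CrossedProduct R X G)}

lemma mem_coeffIdeal {S : Set G} {x : X} {r : R} :
    r ∈ coeffIdeal I S x ↔ ∃ h ∈ I, support h ⊆ S ∧ h 1 x = r :=
  TwoSidedIdeal.mem_mk' _ _ _ _ _ _ _

lemma exists_mem_apply_one_eq_piSingle [IsSimpleRing R] [DecidableEq X]
    {S : Set G} {f : CrossedProduct R X G} (hfI : f ∈ I) (hfS : support f ⊆ S) {x : X}
    (hfx : f 1 x ≠ 0) : ∃ h ∈ I, support h ⊆ S ∧ h 1 = Pi.single x 1 := by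
  obtain ⟨h, hI, hS, hx⟩ := mem_coeffIdeal.1 <|
    IsSimpleRing.one_mem_of_ne_zero_mem (coeffIdeal I S x) hfx
      (mem_coeffIdeal.2 ⟨f, hfI, hfS, rfl⟩)
  let e : X → R := Pi.single x 1
  have he : ∀ k, (single 1 e * h * single 1 e : CrossedProduct R X G) k = e * h k * act k e :=
    fun k => by rw [mul_single_one_apply, single_one_mul_apply]
  refine ⟨single 1 e * h * single 1 e, I.mul_mem_right _ _ (I.mul_mem_left _ _ hI),
    (support_subset_of_apply_eq_zero fun k hk => ?_).trans hS, ?_⟩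
  · rw [he, hk, mul_zero, zero_mul]
  · rw [he, one_act, ← Pi.single_mul_left, ← Pi.single_mul_right, hx]
    simp

lemma exists_mem_minimal (hI : I ≠ ⊥) :
    ∃ f ∈ I, f 1 ≠ 0 ∧ ∀ w ∈ I, support w ⊆ support f → w 1 = 0 → w = 0 := by
  obtain ⟨z, hzI, hz⟩ := SetLike.exists_of_lt (bot_lt_iff_ne_bot.mpr hI)
  obtain ⟨f₀, ⟨hf₀I, hf₀⟩, hmin⟩ :=
    (InvImage.wf (fun w : CrossedProduct R X G => (support w).ncard) wellFounded_lt).has_min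
      {w | w ∈ I ∧ w ≠ 0} ⟨z, hzI, fun h => hz ((TwoSidedIdeal.mem_bot _).2 h)⟩
  obtain ⟨g, hg⟩ := Function.ne_iff.1 hf₀
  refine ⟨f₀ * single g⁻¹ 1, I.mul_mem_right _ _ hf₀I, by rwa [mul_single_apply, inv_inv, one_mul],
    fun w hwI hwS hw1 => ?_⟩
  by_contra hw
  refine hmin (w * single g 1) ⟨I.mul_mem_right _ _ hwI, fun h0 => hw ?_⟩ ?_
  · funext k
    have := congrArg (fun f : CrossedProduct R X G => f (k * g)) h0
    rwa [mul_single_apply, mul_inv_cancel_right] at this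
  · show (support (w * single g 1)).ncard < (support f₀).ncard
    rw [ncard_support_mul_single, ← ncard_support_mul_single f₀ g⁻¹]
    refine Set.ncard_lt_ncard (ssubset_of_subset_not_subset hwS fun h => ?_)
    exact h (show (f₀ * single g⁻¹ 1 : CrossedProduct R X G) 1 ≠ 0 by
      rwa [mul_single_apply, inv_inv, one_mul]) hw1

/-- The commutators of `h` with `∏_{x ∈ X} R` lie in `I`, are supported in `support f` and
vanish at `1`, so minimality kills them. -/
lemma exists_single_one_piSingle_mem [IsSimpleRing R] [DecidableEq X]
    (houter : ∀ g : G, g ≠ 1 → ¬ ∃ u : Rˣ, ∀ r : R, g • r = (u : R) * r * (↑u⁻¹ : R))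
    {f : CrossedProduct R X G} (hfI : f ∈ I) (hf1 : f 1 ≠ 0)
    (hmin : ∀ w ∈ I, support w ⊆ support f → w 1 = 0 → w = 0) :
    ∃ x, single 1 (Pi.single x (1 : R)) ∈ I := by
  obtain ⟨x, hx⟩ := Function.ne_iff.1 hf1
  obtain ⟨h, hI, hS, h1⟩ := exists_mem_apply_one_eq_piSingle hfI subset_rfl hx
  have hcomm : ∀ b, single 1 b * h = h * single 1 b := fun b => sub_eq_zero.1 <| by
    refine hmin _ (I.sub_mem (I.mul_mem_left _ _ hI) (I.mul_mem_right _ _ hI))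
      ((support_subset_of_apply_eq_zero fun k hk => ?_).trans hS) ?_
    · show (single 1 b * h : CrossedProduct R X G) k - (h * single 1 b : CrossedProduct R X G) k = 0
      rw [single_one_mul_apply, mul_single_one_apply, hk, mul_zero, zero_mul, sub_zero]
    · show (single 1 b * h : CrossedProduct R X G) 1 - (h * single 1 b : CrossedProduct R X G) 1 = 0
      rw [single_one_mul_apply, mul_single_one_apply, one_act, h1, sub_eq_zero,
        ← Pi.single_mul_left, ← Pi.single_mul_right, mul_one, one_mul]
  exact ⟨x, by rwa [eq_single_one_of_forall_commute houter hcomm, h1] at hI⟩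

lemma eq_top_of_single_one_piSingle_mem [Fintype X] [DecidableEq X]
    [MulAction.IsPretransitive G X] {x₀ : X} (h : single 1 (Pi.single x₀ (1 : R)) ∈ I) :
    I = ⊤ := by
  rw [← I.one_mem_iff, ← sum_single_one_piSingle]
  refine I.finsetSum_mem _ _ fun x _ => ?_
  obtain ⟨g, rfl⟩ := MulAction.exists_smul_eq G x₀ x
  have := I.mul_mem_right _ (single g⁻¹ 1) (I.mul_mem_left (single g 1) _ h)
  rwa [single_mul_single_one_mul_single, act_piSingle, smul_one] at this

end Ideal

end CrossedProduct

/-- Let `R` be a simple unital ring, `X` a finite nonempty set and `G` a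
finite group acting on `R` by ring automorphisms, in such a way that every non-identity
element of `G` acts by an *outer* automorphism of `R`, and acting transitively on `X`.
Then the crossed product ring `(∏_{x ∈ X} R) ⋊ G` is a simple ring. -/
theorem crossedProduct_isSimpleRing
    (R X G : Type) [Ring R] [IsSimpleRing R] [Group G] [Fintype G] [DecidableEq G]
    [MulSemiringAction G R] [MulAction G X] [Fintype X] [Nonempty X]
    (houter : ∀ g : G, g ≠ 1 → ¬ ∃ u : Rˣ, ∀ r : R, g • r = (u : R) * r * (↑u⁻¹ : R))
    (htrans : MulAction.IsPretransitive G X) :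
    IsSimpleRing (CrossedProduct R X G) := by
  classical
  refine .of_eq_bot_or_eq_top fun I => or_iff_not_imp_left.2 fun hI => ?_
  obtain ⟨f, hfI, hf1, hmin⟩ := CrossedProduct.exists_mem_minimal hI
  obtain ⟨x, hx⟩ := CrossedProduct.exists_single_one_piSingle_mem houter hfI hf1 hmin
  exact CrossedProduct.eq_top_of_single_one_piSingle_mem hx
end

section
/- Let R be a simple unital ring and let σ be a ring automorphism of R. If a ∈ R is a nonzero element satisfying a·σ(r) = r·a for all r ∈ R, then a is a unit of R and σ is the inner automorphism r ↦ a⁻¹ r a; in particular, σ is not outer. -/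
/-- Let `R` be a simple unital ring and `σ` a ring automorphism of `R`.
If `a ∈ R` is a nonzero element satisfying `a * σ r = r * a` for all `r ∈ R`, then `a` is a
unit of `R` and `σ` is the inner automorphism `r ↦ a⁻¹ * r * a`; in particular `σ` is not
outer. -/
theorem simple_ring_relatively_inner_of_semi_commuting
    (R : Type*) [Ring R] [IsSimpleRing R] (σ : R ≃+* R) (a : R) (ha : a ≠ 0)
    (hcomm : ∀ r : R, a * σ r = r * a) :
    IsUnit a ∧ ∃ u : Rˣ, (u : R) = a ∧ ∀ r : R, σ r = (↑u⁻¹ : R) * r * (u : R) := by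
  -- The ideal aR = Ra
  set I : TwoSidedIdeal R := TwoSidedIdeal.mk' {x | ∃ r, x = a * r}
    ⟨0, by simp⟩
    (fun {x y} ⟨r, hr⟩ ⟨s, hs⟩ => ⟨r + s, by rw [hr, hs, mul_add]⟩)
    (fun {x} ⟨r, hr⟩ => ⟨-r, by rw [hr, mul_neg]⟩)
    (fun {x y} ⟨r, hr⟩ => ⟨σ x * r, by rw [hr, ← mul_assoc, ← mul_assoc, hcomm]⟩)
    (fun {x y} ⟨r, hr⟩ => ⟨r * y, by rw [hr, mul_assoc]⟩) with hI
  have haI : a ∈ I := by rw [hI, TwoSidedIdeal.mem_mk']; exact ⟨1, (mul_one a).symm⟩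
  have hIne : I ≠ ⊥ := by
    intro h
    exact ha (by simpa [h] using haI)
  have hItop : I = ⊤ := (IsSimpleOrder.eq_bot_or_eq_top I).resolve_left hIne
  have h1 : (1 : R) ∈ I := hItop ▸ TwoSidedIdeal.mem_top _
  rw [hI, TwoSidedIdeal.mem_mk'] at h1
  obtain ⟨b, hb⟩ := h1
  have hab : a * b = 1 := hb.symm
  -- left inverse: b * a = 1
  -- Note b * a : we have a * σ (b * a ...). Use: a * (b * a) = a, so a * (b*a - 1) = 0.
  -- Instead use the second ideal J = Ra to get a left inverse c, then c = b.
  set J : TwoSidedIdeal R := TwoSidedIdeal.mk' {x | ∃ r, x = r * a}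
    ⟨0, by simp⟩
    (fun {x y} ⟨r, hr⟩ ⟨s, hs⟩ => ⟨r + s, by rw [hr, hs, add_mul]⟩)
    (fun {x} ⟨r, hr⟩ => ⟨-r, by rw [hr, neg_mul]⟩)
    (fun {x y} ⟨r, hr⟩ => ⟨x * r, by rw [hr, mul_assoc]⟩)
    (fun {x y} ⟨r, hr⟩ => ⟨r * σ.symm y, by
      rw [hr, mul_assoc, mul_assoc, ← hcomm (σ.symm y), σ.apply_symm_apply]⟩) with hJ
  have haJ : a ∈ J := by rw [hJ, TwoSidedIdeal.mem_mk']; exact ⟨1, (one_mul a).symm⟩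
  have hJne : J ≠ ⊥ := by
    intro h
    exact ha (by simpa [h] using haJ)
  have hJtop : J = ⊤ := (IsSimpleOrder.eq_bot_or_eq_top J).resolve_left hJne
  have h1' : (1 : R) ∈ J := hJtop ▸ TwoSidedIdeal.mem_top _
  rw [hJ, TwoSidedIdeal.mem_mk'] at h1'
  obtain ⟨c, hc⟩ := h1'
  have hca : c * a = 1 := hc.symm
  have hcb : c = b := by
    calc c = c * (a * b) := by rw [hab, mul_one]
    _ = (c * a) * b := by rw [mul_assoc]
    _ = b := by rw [hca, one_mul]
  have hba : b * a = 1 := hcb ▸ hca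
  refine ⟨⟨⟨a, b, hab, hba⟩, rfl⟩, ⟨a, b, hab, hba⟩, rfl, fun r => ?_⟩
  show σ r = b * r * a
  calc σ r = b * (a * σ r) := by rw [← mul_assoc, hba, one_mul]
  _ = b * r * a := by rw [hcomm, mul_assoc]
end

section
/- Let 𝒜 be an abelian category in which every object is artinian, i.e., the partially ordered set of subobjects of every object satisfies the descending chain condition. Let ℬ be a full subcategory of 𝒜 containing the zero object and closed under subobjects, quotient objects, and finite direct sums. Then the inclusion functor ℱ : ℬ → 𝒜 admits a left adjoint 𝒢 : 𝒜 → ℬ which sends an object M of 𝒜 to its largest quotient lying in ℬ, and for every object M of 𝒜 the canonical adjunction morphism M → ℱ(𝒢(M)) is an epimorphism. -/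
/-!
Among the kernels of morphisms from `M` into objects of `ℬ`, pick a minimal one, `ker f₀`
(descending chain condition). Since `ker (f₀, g) = ker f₀ ⊓ ker g` and `ℬ` is closed under
direct sums, minimality forces `ker f₀ ≤ ker g` for every `g : M ⟶ X` with `X ∈ ℬ`. Hence every
such `g` factors through the coimage of `f₀`, which lies in `ℬ` because it is isomorphic to the
image of `f₀`, a subobject of an object of `ℬ`. The epimorphism `M ⟶ coim f₀` is therefore a
universal arrow from `M` to the inclusion, and these universal arrows assemble into a left
adjoint whose unit they are.
-/

open CategoryTheory CategoryTheory.Limits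

namespace CategoryTheory

section KernelSubobject

variable {C : Type*} [Category C] [HasZeroMorphisms C] [HasBinaryBiproducts C] [HasKernels C]
  [HasPullbacks C]

theorem kernelSubobject_biprod_lift {X Y Z : C} (f : X ⟶ Y) (g : X ⟶ Z) :
    kernelSubobject (biprod.lift f g) = kernelSubobject f ⊓ kernelSubobject g := by
  apply le_antisymm
  · apply le_inf
    · simpa using kernelSubobject_comp_le (biprod.lift f g) biprod.fst
    · simpa using kernelSubobject_comp_le (biprod.lift f g) biprod.snd
  · apply le_kernelSubobject
    apply biprod.hom_ext
    · rw [Category.assoc, biprod.lift_fst, zero_comp,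
        ← Subobject.ofLE_arrow (inf_le_left : _ ≤ kernelSubobject f), Category.assoc,
        kernelSubobject_arrow_comp, comp_zero]
    · rw [Category.assoc, biprod.lift_snd, zero_comp,
        ← Subobject.ofLE_arrow (inf_le_right : _ ≤ kernelSubobject g), Category.assoc,
        kernelSubobject_arrow_comp, comp_zero]

theorem exists_forall_kernel_ι_comp_eq_zero {P : ObjectProperty C} [P.Nonempty]
    (hsum : ∀ {X Y : C}, P X → P Y → P (X ⊞ Y)) (M : C) [WellFoundedLT (Subobject M)] :
    ∃ (X : C) (f₀ : M ⟶ X), P X ∧ ∀ {Y : C} (g : M ⟶ Y), P Y → kernel.ι f₀ ≫ g = 0 := by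
  obtain ⟨X₀, hX₀⟩ := P.exists_prop_of_nonempty
  obtain ⟨_, ⟨X, f₀, hX, rfl⟩, hmin⟩ := wellFounded_lt.has_min
    {N : Subobject M | ∃ (X : C) (f : M ⟶ X), P X ∧ kernelSubobject f = N}
    ⟨_, X₀, 0, hX₀, rfl⟩
  refine ⟨X, f₀, hX, fun g hY => ?_⟩
  have hle : kernelSubobject f₀ ≤ kernelSubobject g := by
    have hnlt := hmin _ ⟨_, biprod.lift f₀ g, hsum hX hY, kernelSubobject_biprod_lift f₀ g⟩
    exact inf_eq_left.1 ((inf_le_left : _ ≤ kernelSubobject f₀).eq_of_not_lt hnlt)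
  rw [← kernelSubobject_factors_iff]
  exact Subobject.factors_of_le _ hle (kernelSubobject_factors _ _ (kernel.condition f₀))

end KernelSubobject

namespace ObjectProperty

variable {C : Type*} [Category C]

theorem exists_leftAdjoint_ι_of_universal_epi (P : ObjectProperty C)
    (h : ∀ M : C, ∃ (Q : P.FullSubcategory) (π : M ⟶ Q.obj), Epi π ∧
      ∀ {X : C} (f : M ⟶ X), P X → ∃ g : Q.obj ⟶ X, π ≫ g = f) :
    ∃ (G : C ⥤ P.FullSubcategory) (adj : G ⊣ P.ι), ∀ M : C, Epi (adj.unit.app M) := by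
  choose Q π hπ hfactor using h
  let e : ∀ (M : C) (B : P.FullSubcategory), (Q M ⟶ B) ≃ (M ⟶ P.ι.obj B) := fun M B =>
    Equiv.ofBijective (fun g => π M ≫ g.hom)
      ⟨fun g₁ g₂ hg => P.hom_ext ((cancel_epi (π M)).1 hg),
        fun f => ⟨homMk (hfactor M f B.2).choose, (hfactor M f B.2).choose_spec⟩⟩
  have he : ∀ (M : C) (B B' : P.FullSubcategory) (g : B ⟶ B') (h : Q M ⟶ B),
      e M B' (h ≫ g) = e M B h ≫ P.ι.map g := fun _ _ _ _ _ => (Category.assoc _ _ _).symm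
  refine ⟨Adjunction.leftAdjointOfEquiv e he, Adjunction.adjunctionOfEquivLeft e he, fun M => ?_⟩
  have hunit : (Adjunction.adjunctionOfEquivLeft e he).unit.app M = π M :=
    Category.comp_id (π M)
  rw [hunit]
  exact hπ M

end ObjectProperty

namespace Abelian

variable {C : Type*} [Category C] [Abelian C] {P : ObjectProperty C}

theorem prop_coimage [P.IsClosedUnderSubobjects] {M X : C} (f : M ⟶ X) (hX : P X) :
    P (Abelian.coimage f) :=
  P.prop_of_iso (coimageIsoImage f).symm (P.prop_of_mono (Abelian.image.ι f) hX)

theorem exists_universal_epi [P.IsClosedUnderSubobjects] [P.Nonempty]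
    (hsum : ∀ {X Y : C}, P X → P Y → P (X ⊞ Y)) (M : C) [WellFoundedLT (Subobject M)] :
    ∃ (Q : P.FullSubcategory) (π : M ⟶ Q.obj), Epi π ∧
      ∀ {X : C} (f : M ⟶ X), P X → ∃ g : Q.obj ⟶ X, π ≫ g = f := by
  obtain ⟨X, f₀, hX, hker⟩ := exists_forall_kernel_ι_comp_eq_zero (P := P) hsum M
  exact ⟨⟨_, prop_coimage f₀ hX⟩, Abelian.coimage.π f₀, inferInstance,
    fun f hf => ⟨cokernel.desc _ f (hker f hf), cokernel.π_desc _ _ _⟩⟩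

end Abelian

end CategoryTheory

theorem exists_leftAdjoint_largest_quotient_general
    {𝒜 : Type*} [Category 𝒜] [Abelian 𝒜]
    (hart : ∀ X : 𝒜, WellFoundedLT (Subobject X))
    (P : 𝒜 → Prop)
    (hzero : ∀ X : 𝒜, IsZero X → P X)
    (hsub : ∀ {S M : 𝒜} (f : S ⟶ M), Mono f → P M → P S)
    (hsum : ∀ {M N : 𝒜}, P M → P N → P (M ⊞ N)) :
    ∃ (G : 𝒜 ⥤ ObjectProperty.FullSubcategory P) (adj : G ⊣ ObjectProperty.ι P),
      ∀ M : 𝒜, Epi (adj.unit.app M) := by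
  have : ObjectProperty.IsClosedUnderSubobjects P := ⟨fun f hf hY => hsub f hf hY⟩
  have : ObjectProperty.Nonempty P := ⟨⟨_, hzero _ (isZero_zero 𝒜)⟩⟩
  exact ObjectProperty.exists_leftAdjoint_ι_of_universal_epi P fun M =>
    have := hart M
    Abelian.exists_universal_epi hsum M

/-- Let `𝒜` be an abelian category in which every object is artinian (the
poset of subobjects of every object satisfies the descending chain condition).  Let `ℬ` be a
full subcategory of `𝒜` (given by a predicate `P` on objects) containing the zero object and
closed under subobjects, quotient objects and finite direct sums.  Then the inclusion functor
`ℱ : ℬ → 𝒜` admits a left adjoint `𝒢 : 𝒜 → ℬ` sending an object `M` to its largest quotient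
lying in `ℬ`, and for every `M` the adjunction unit `M ⟶ ℱ(𝒢(M))` is an epimorphism.
(The fact that `𝒢 M` is the largest quotient of `M` lying in `ℬ` is expressed by the unit
being epic together with the universal property of the adjunction: every morphism — in
particular every epimorphism — from `M` to an object of `ℬ` factors uniquely through the
unit.) -/
theorem exists_leftAdjoint_largest_quotient
    {𝒜 : Type*} [Category 𝒜] [Abelian 𝒜]
    (hart : ∀ X : 𝒜, WellFoundedLT (Subobject X))
    (P : 𝒜 → Prop)
    (hzero : ∀ X : 𝒜, IsZero X → P X)
    (hsub : ∀ {S M : 𝒜} (f : S ⟶ M), Mono f → P M → P S)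
    (hquot : ∀ {M Q : 𝒜} (f : M ⟶ Q), Epi f → P M → P Q)
    (hsum : ∀ {M N : 𝒜}, P M → P N → P (M ⊞ N)) :
    ∃ (G : 𝒜 ⥤ ObjectProperty.FullSubcategory P) (adj : G ⊣ ObjectProperty.ι P),
      ∀ M : 𝒜, Epi (adj.unit.app M) :=
  exists_leftAdjoint_largest_quotient_general hart P hzero hsub hsum
end
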